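/- Let W be a band-generator word representing β ∈ B_n. Then nb(W) = nb([β]) if and only if |W| = min{||β'|| : β' conjugate to β}; that is, W realizes the negative band number of the conjugacy class of β if and only if W is a shortest word among all words representing conjugates of β. -/

import Mathlib

/-- The braid relations on the free group on `n - 1` Artin generators. -/
def braidRels (n : ℕ) : Set (FreeGroup (Fin (n - 1))) :=
  { r | (∃ i j : Fin (n - 1), (i : ℕ) + 1 < (j : ℕ) ∧
          r = FreeGroup.of i * FreeGroup.of j * (FreeGroup.of i)⁻¹ * (FreeGroup.of j)⁻¹) ∨
        (∃ i j : Fin (n - 1), (i : ℕ) + 1 = (j : ℕ) ∧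
          r = FreeGroup.of i * FreeGroup.of j * FreeGroup.of i *
              (FreeGroup.of j * FreeGroup.of i * FreeGroup.of j)⁻¹) }

/-- The braid group `B_n`, presented with Artin generators `σ_1, …, σ_{n-1}`. -/
abbrev BraidGroup (n : ℕ) := PresentedGroup (braidRels n)

/-- The Artin generator `σ_k` (1-indexed; junk value `1` if `k` is out of range). -/
noncomputable def sigma (n : ℕ) (k : ℕ) : BraidGroup n :=
  if h : k - 1 < n - 1 then PresentedGroup.of (⟨k - 1, h⟩ : Fin (n - 1)) else 1

/-- The band generator `a_{i,j} = (σ_{j-1}⋯σ_{i+1}) σ_i (σ_{j-1}⋯σ_{i+1})⁻¹`. -/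
noncomputable def band (n i j : ℕ) : BraidGroup n :=
  (((List.range' (i + 1) (j - 1 - i)).reverse.map (sigma n)).prod) * sigma n i *
    (((List.range' (i + 1) (j - 1 - i)).reverse.map (sigma n)).prod)⁻¹

/-- The set of band generators `a_{i,j}`, `1 ≤ i < j ≤ n`. -/
def Bands (n : ℕ) : Set (BraidGroup n) :=
  { b | ∃ i j : ℕ, 1 ≤ i ∧ i < j ∧ j ≤ n ∧ b = band n i j }

/-- The monoid `SQP(n)` of strongly quasipositive braids. -/
def SQP (n : ℕ) : Submonoid (BraidGroup n) := Submonoid.closure (Bands n)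

/-- `δ = σ_{n-1} σ_{n-2} ⋯ σ_1`. -/
noncomputable def bdelta (n : ℕ) : BraidGroup n :=
  (((List.range' 1 (n - 1)).reverse.map (sigma n)).prod)

/-- The partial order `V ≤ W` iff `W = P V Q` with `P, Q ∈ SQP(n)`. -/
def bble (n : ℕ) (V W : BraidGroup n) : Prop :=
  ∃ P ∈ SQP n, ∃ Q ∈ SQP n, W = P * V * Q

/-- `inf(β) = max { r : δ^r ≤ β }`. -/
noncomputable def binf (n : ℕ) (β : BraidGroup n) : ℤ :=
  sSup { r : ℤ | bble n (bdelta n ^ r) β }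

/-- `sup(β) = min { s : β ≤ δ^s }`. -/
noncomputable def bsup (n : ℕ) (β : BraidGroup n) : ℤ :=
  sInf { s : ℤ | bble n β (bdelta n ^ s) }

/-- The canonical length `ℓ(β) = sup(β) - inf(β)`. -/
noncomputable def ell (n : ℕ) (β : BraidGroup n) : ℤ := bsup n β - binf n β

/-- A letter `(i, j, ε)` stands for `a_{i,j}` if `ε = true` and `a_{i,j}⁻¹` if `ε = false`. -/
noncomputable def evalLetter (n : ℕ) (l : ℕ × ℕ × Bool) : BraidGroup n :=
  if l.2.2 then band n l.1 l.2.1 else (band n l.1 l.2.1)⁻¹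

/-- A band-generator word: every letter indexes an honest band generator. -/
def IsWord (n : ℕ) (W : List (ℕ × ℕ × Bool)) : Prop :=
  ∀ l ∈ W, 1 ≤ l.1 ∧ l.1 < l.2.1 ∧ l.2.1 ≤ n

/-- `W` represents the braid `β`. -/
def Represents (n : ℕ) (W : List (ℕ × ℕ × Bool)) (β : BraidGroup n) : Prop :=
  IsWord n W ∧ (W.map (evalLetter n)).prod = β

/-- The number of negative bands in the word `W`. -/
def nbWord (W : List (ℕ × ℕ × Bool)) : ℕ := (W.filter fun l => !l.2.2).length

/-- The negative band number `nb(β)` of a braid. -/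
noncomputable def nb (n : ℕ) (β : BraidGroup n) : ℕ :=
  sInf { m : ℕ | ∃ W, Represents n W β ∧ nbWord W = m }

/-- The negative band number `nb([β])` of a conjugacy class. -/
noncomputable def nbConj (n : ℕ) (β : BraidGroup n) : ℕ :=
  sInf { m : ℕ | ∃ β' : BraidGroup n, IsConj β β' ∧ nb n β' = m }

/-- The minimal band-generator word length `‖β‖`. -/
noncomputable def wordLen (n : ℕ) (β : BraidGroup n) : ℕ :=
  sInf { m : ℕ | ∃ W, Represents n W β ∧ W.length = m }

/-- The minimal length of a positive band-generator word representing `A`. -/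
noncomputable def posLen (n : ℕ) (A : BraidGroup n) : ℕ :=
  sInf { m : ℕ | ∃ W, Represents n W A ∧ (∀ l ∈ W, l.2.2 = true) ∧ W.length = m }

/-- Canonical factors: `e ≤ A ≤ δ`. -/
def CnFct (n : ℕ) : Set (BraidGroup n) :=
  { A | bble n 1 A ∧ bble n A (bdelta n) }

/-- `A ≺ B` iff `B = A Q` for a canonical factor `Q`. -/
def prec (n : ℕ) (A B : BraidGroup n) : Prop :=
  ∃ Q ∈ CnFct n, B = A * Q

/-- `A B` is maximally left-weighted. -/
def MLW (n : ℕ) (A B : BraidGroup n) : Prop :=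
  ¬ ∃ A' ∈ CnFct n, ∃ B' ∈ CnFct n, A * B = A' * B' ∧ prec n A A' ∧ A ≠ A'

/-- `β = δ^r A_1 ⋯ A_k` is a left-canonical factorization. -/
def IsLCF (n : ℕ) (β : BraidGroup n) (r : ℤ) (A : List (BraidGroup n)) : Prop :=
  β = bdelta n ^ r * A.prod ∧
  (∀ X ∈ A, X ∈ CnFct n ∧ X ≠ 1 ∧ X ≠ bdelta n) ∧
  A.Chain' (MLW n)

/-- The super summit set `SSS([β])`: conjugates of `β` of minimal canonical length. -/
def SSS (n : ℕ) (β : BraidGroup n) : Set (BraidGroup n) :=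
  { β' | IsConj β β' ∧ ∀ γ : BraidGroup n, IsConj β γ → ell n β' ≤ ell n γ }

/-- The summit set `SS([β])`: conjugates of `β` of maximal infimum. -/
def SS (n : ℕ) (β : BraidGroup n) : Set (BraidGroup n) :=
  { β' | IsConj β β' ∧ ∀ γ : BraidGroup n, IsConj β γ → binf n γ ≤ binf n β' }

/-- The writhe homomorphism, sending each `σ_i` to `1 ∈ ℤ`. -/
noncomputable def writheHom (n : ℕ) : BraidGroup n →* Multiplicative ℤ :=
  PresentedGroup.toGroup (f := fun _ => Multiplicative.ofAdd (1 : ℤ)) (by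
    rintro r (⟨i, j, hij, rfl⟩ | ⟨i, j, hij, rfl⟩) <;>
      (simp [map_mul, map_inv, FreeGroup.lift_apply_of]))

/-- The writhe (exponent sum) of a braid. -/
noncomputable def writhe (n : ℕ) (β : BraidGroup n) : ℤ :=
  Multiplicative.toAdd (writheHom n β)


section Aux

lemma writhe_mul (n : ℕ) (x y : BraidGroup n) :
    writhe n (x * y) = writhe n x + writhe n y := by
  simp [writhe, map_mul]

lemma writhe_inv (n : ℕ) (x : BraidGroup n) : writhe n x⁻¹ = - writhe n x := by
  simp [writhe, map_inv]

lemma writhe_of (n : ℕ) (i : Fin (n - 1)) :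
    writhe n (PresentedGroup.of i) = 1 := by
  simp [writhe, writheHom, PresentedGroup.toGroup.of]

lemma writhe_sigma (n k : ℕ) (hk : k - 1 < n - 1) : writhe n (sigma n k) = 1 := by
  rw [sigma, dif_pos hk]; exact writhe_of n _

lemma writhe_band (n i j : ℕ) (h1 : 1 ≤ i) (h2 : i < j) (h3 : j ≤ n) :
    writhe n (band n i j) = 1 := by
  rw [band, writhe_mul, writhe_mul, writhe_inv, writhe_sigma n i (by omega)]
  ring

lemma writhe_evalLetter (n : ℕ) (l : ℕ × ℕ × Bool)
    (hl : 1 ≤ l.1 ∧ l.1 < l.2.1 ∧ l.2.1 ≤ n) :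
    writhe n (evalLetter n l) = if l.2.2 then 1 else -1 := by
  obtain ⟨h1, h2, h3⟩ := hl
  rcases Bool.eq_false_or_eq_true l.2.2 with hb | hb <;>
    simp [evalLetter, hb, writhe_inv, writhe_band n l.1 l.2.1 h1 h2 h3]

lemma writhe_word (n : ℕ) : ∀ W : List (ℕ × ℕ × Bool), IsWord n W →
    writhe n (W.map (evalLetter n)).prod = (W.length : ℤ) - 2 * nbWord W
  | [], _ => by simp [writhe, nbWord]
  | l :: W, hW => by
    have hl := hW l (by simp)
    have hW' : IsWord n W := fun x hx => hW x (by simp [hx])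
    have ih := writhe_word n W hW'
    simp only [List.map_cons, List.prod_cons, writhe_mul,
      writhe_evalLetter n l (hW l (by simp)), ih, nbWord, List.filter_cons,
      List.length_cons]
    rcases Bool.eq_false_or_eq_true l.2.2 with hb | hb <;>
      simp only [hb, Bool.not_true, Bool.not_false, if_true, if_false,
        List.length_cons] <;> push_cast <;> ring

lemma exists_rep (n : ℕ) (β : BraidGroup n) : ∃ W, Represents n W β := by
  have hβ : β ∈ Subgroup.closure (Set.range (PresentedGroup.of (rels := braidRels n))) := by
    rw [PresentedGroup.closure_range_of]; trivial
  induction hβ using Subgroup.closure_induction with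
  | mem x hx =>
    obtain ⟨i, rfl⟩ := hx
    refine ⟨[((i : ℕ) + 1, (i : ℕ) + 2, true)], ?_, ?_⟩
    · intro l hl
      simp only [List.mem_singleton] at hl
      subst hl
      have := i.isLt
      refine ⟨?_, ?_, ?_⟩ <;> dsimp only <;> omega
    · have hi := i.isLt
      have hband : band n ((i : ℕ) + 1) ((i : ℕ) + 2) = PresentedGroup.of i := by
        have h0 : (i : ℕ) + 2 - 1 - ((i : ℕ) + 1) = 0 := by omega
        rw [band, h0]
        simp only [List.range'_zero, List.reverse_nil, List.map_nil, List.prod_nil,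
          one_mul, inv_one, mul_one]
        rw [sigma, dif_pos (by omega : (i : ℕ) + 1 - 1 < n - 1)]
        exact congrArg PresentedGroup.of (Fin.ext (by simp))
      simp [evalLetter, hband]
  | one => exact ⟨[], fun l hl => absurd hl List.not_mem_nil, by simp⟩
  | mul x y _ _ hx hy =>
    obtain ⟨Wx, hWx, hWxp⟩ := hx
    obtain ⟨Wy, hWy, hWyp⟩ := hy
    refine ⟨Wx ++ Wy, ?_, ?_⟩
    · intro l hl
      rcases List.mem_append.1 hl with h | h
      exacts [hWx l h, hWy l h]
    · rw [List.map_append, List.prod_append, hWxp, hWyp]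
  | inv x _ hx =>
    obtain ⟨Wx, hWx, hWxp⟩ := hx
    refine ⟨Wx.reverse.map (fun l => (l.1, l.2.1, !l.2.2)), ?_, ?_⟩
    · intro l hl
      simp only [List.mem_map, List.mem_reverse] at hl
      obtain ⟨l', hl', rfl⟩ := hl
      exact hWx l' hl'
    · have heval : ∀ l : ℕ × ℕ × Bool,
          evalLetter n (l.1, l.2.1, !l.2.2) = (evalLetter n l)⁻¹ := by
        intro l
        rcases Bool.eq_false_or_eq_true l.2.2 with hb | hb <;> simp [evalLetter, hb]
      calc ((Wx.reverse.map (fun l => (l.1, l.2.1, !l.2.2))).map (evalLetter n)).prod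
          = ((Wx.map (evalLetter n)).map (fun x => x⁻¹)).reverse.prod := by
            rw [List.map_map, List.map_map, ← List.map_reverse]
            congr 1
            exact List.map_congr_left (fun l _ => heval l)
        _ = ((Wx.map (evalLetter n)).prod)⁻¹ := (List.prod_inv_reverse _).symm
        _ = x⁻¹ := by rw [hWxp]

lemma length_eq (n : ℕ) (W : List (ℕ × ℕ × Bool)) (β : BraidGroup n)
    (h : Represents n W β) :
    (W.length : ℤ) = writhe n β + 2 * nbWord W := by
  have := writhe_word n W h.1
  rw [h.2] at this
  omega

lemma writhe_conj (n : ℕ) (β β' : BraidGroup n) (h : IsConj β β') :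
    writhe n β' = writhe n β := by
  obtain ⟨c, hc⟩ := isConj_iff.1 h
  rw [← hc, writhe_mul, writhe_mul, writhe_inv]
  ring

end Aux

/-- a word `W` representing `β` realizes `nb([β])` iff it is a shortest
word among all words representing conjugates of `β`. -/
theorem statement_13 (n : ℕ) (W : List (ℕ × ℕ × Bool)) (β : BraidGroup n)
    (h : Represents n W β) :
    nbWord W = nbConj n β ↔
      W.length =
        sInf { m : ℕ | ∃ β' : BraidGroup n, IsConj β β' ∧ wordLen n β' = m } := by
  classical
  set U : Set ℕ :=
    {k | ∃ β' : BraidGroup n, IsConj β β' ∧ ∃ W', Represents n W' β' ∧ nbWord W' = k} with hUdef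
  set V : Set ℕ :=
    {m | ∃ β' : BraidGroup n, IsConj β β' ∧ ∃ W', Represents n W' β' ∧ W'.length = m} with hVdef
  have hWU : nbWord W ∈ U := ⟨β, IsConj.refl β, W, h, rfl⟩
  have hWV : W.length ∈ V := ⟨β, IsConj.refl β, W, h, rfl⟩
  -- `nbConj n β = sInf U`
  have h1 : nbConj n β = sInf U := by
    apply le_antisymm
    · obtain ⟨β', hβ', W', hW', hk⟩ := Nat.sInf_mem ⟨nbWord W, hWU⟩
      calc nbConj n β ≤ nb n β' := Nat.sInf_le ⟨β', hβ', rfl⟩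
        _ ≤ sInf U := by rw [← hk]; exact Nat.sInf_le ⟨W', hW', rfl⟩
    · obtain ⟨β', hβ', hval⟩ :=
        Nat.sInf_mem (⟨nb n β, β, IsConj.refl β, rfl⟩ :
          Set.Nonempty {m : ℕ | ∃ β' : BraidGroup n, IsConj β β' ∧ nb n β' = m})
      obtain ⟨W₀, hW₀⟩ := exists_rep n β'
      obtain ⟨W', hW', hk⟩ :=
        Nat.sInf_mem (⟨nbWord W₀, W₀, hW₀, rfl⟩ :
          Set.Nonempty {m : ℕ | ∃ Wx, Represents n Wx β' ∧ nbWord Wx = m})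
      exact Nat.sInf_le ⟨β', hβ', W', hW', by rw [hk]; exact hval⟩
  -- the RHS infimum equals `sInf V`
  have h2 : sInf {m : ℕ | ∃ β' : BraidGroup n, IsConj β β' ∧ wordLen n β' = m} = sInf V := by
    apply le_antisymm
    · obtain ⟨β', hβ', W', hW', hk⟩ := Nat.sInf_mem ⟨W.length, hWV⟩
      calc sInf {m : ℕ | ∃ β' : BraidGroup n, IsConj β β' ∧ wordLen n β' = m}
          ≤ wordLen n β' := Nat.sInf_le ⟨β', hβ', rfl⟩
        _ ≤ sInf V := by rw [← hk]; exact Nat.sInf_le ⟨W', hW', rfl⟩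
    · obtain ⟨β', hβ', hval⟩ :=
        Nat.sInf_mem (⟨wordLen n β, β, IsConj.refl β, rfl⟩ :
          Set.Nonempty {m : ℕ | ∃ β' : BraidGroup n, IsConj β β' ∧ wordLen n β' = m})
      obtain ⟨W₀, hW₀⟩ := exists_rep n β'
      obtain ⟨W', hW', hk⟩ :=
        Nat.sInf_mem (⟨W₀.length, W₀, hW₀, rfl⟩ :
          Set.Nonempty {m : ℕ | ∃ Wx, Represents n Wx β' ∧ Wx.length = m})
      exact Nat.sInf_le ⟨β', hβ', W', hW', by rw [hk]; exact hval⟩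
  -- affine relation between the two infima via the writhe
  have h3 : (↑(sInf V) : ℤ) = writhe n β + 2 * (↑(sInf U) : ℤ) := by
    obtain ⟨β₁, hβ₁, W₁, hW₁, hk₁⟩ := Nat.sInf_mem ⟨nbWord W, hWU⟩
    have hlen₁ : (W₁.length : ℤ) = writhe n β + 2 * (↑(sInf U) : ℤ) := by
      rw [length_eq n W₁ β₁ hW₁, writhe_conj n β β₁ hβ₁, hk₁]
    obtain ⟨β₂, hβ₂, W₂, hW₂, hk₂⟩ := Nat.sInf_mem ⟨W.length, hWV⟩
    have hlen₂ : (W₂.length : ℤ) = writhe n β + 2 * (nbWord W₂ : ℤ) := by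
      rw [length_eq n W₂ β₂ hW₂, writhe_conj n β β₂ hβ₂]
    have hle₁ : sInf V ≤ W₁.length := Nat.sInf_le ⟨β₁, hβ₁, W₁, hW₁, rfl⟩
    have hle₂ : sInf U ≤ nbWord W₂ := Nat.sInf_le ⟨β₂, hβ₂, W₂, hW₂, rfl⟩
    omega
  have hW : (W.length : ℤ) = writhe n β + 2 * (nbWord W : ℤ) := length_eq n W β h
  rw [h1, h2]
  omega
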